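/- The set of Hamming weights occurring among codewords of L_k^+ equals {6i : i ∈ ℕ, 6i ≤ 3k} ∪ {k + 2i + 1 : i ∈ ℕ, 2i + 1 ≤ k}. -/

import Mathlib

/-!
Over `F₂` we have `G_k = J - I`, so `m ⬝ G_k = w(m) • 𝟙 + m`. Hence `m ⬝ G_k = m` when
`w(m)` is even and `m ⬝ G_k` is the complement of `m` when `w(m)` is odd, and the codeword has
weight `3 w(m)`, resp. `k + w(m)`. Every weight `0 ≤ w(m) ≤ k` is attained.
-/

def G (k : ℕ) : Matrix (Fin k) (Fin k) (ZMod 2) := fun i j => if i = j then 0 else 1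

open Finset

section Hamming

variable {ι : Type*} [Fintype ι]

theorem exists_hammingNorm_eq {β : Type*} [Zero β] [Nontrivial β] [DecidableEq β] {t : ℕ}
    (ht : t ≤ Fintype.card ι) : ∃ v : ι → β, hammingNorm v = t := by
  classical
  obtain ⟨s, -, rfl⟩ := exists_subset_card_eq (s := (univ : Finset ι)) ht
  obtain ⟨b, hb⟩ := exists_ne (0 : β)
  refine ⟨fun i => if i ∈ s then b else 0, ?_⟩
  simp [hammingNorm, hb]

theorem ZMod.natCast_hammingNorm (v : ι → ZMod 2) : (hammingNorm v : ZMod 2) = ∑ i, v i := by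
  have h01 : ∀ i, v i = if v i ≠ 0 then 1 else 0 := fun i => by
    generalize v i = a; revert a; decide
  rw [hammingNorm, Fintype.sum_congr _ _ h01, sum_boole]

theorem ZMod.hammingNorm_add_one_add_hammingNorm (v : ι → ZMod 2) :
    hammingNorm (v + 1) + hammingNorm v = Fintype.card ι := by
  have hflip : ∀ i, v i + 1 ≠ 0 ↔ ¬ v i ≠ 0 := fun i => by
    generalize v i = a; revert a; decide
  simp only [hammingNorm, Pi.add_apply, Pi.one_apply, hflip]
  rw [add_comm, card_filter_add_card_filter_not, card_univ]

end Hamming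

section LkPlus

variable {k : ℕ}

theorem vecMul_G_apply (m : Fin k → ZMod 2) (j : Fin k) :
    Matrix.vecMul m (G k) j = (hammingNorm m : ZMod 2) + m j := by
  rw [ZMod.natCast_hammingNorm, ← CharTwo.sub_eq_add, eq_sub_iff_add_eq,
    ← Fintype.sum_ite_eq' j m, Matrix.vecMul, dotProduct, ← sum_add_distrib]
  refine sum_congr rfl fun i _ => ?_
  by_cases hij : i = j <;> simp [G, hij]

theorem vecMul_G_of_even {m : Fin k → ZMod 2} (h : Even (hammingNorm m)) :
    Matrix.vecMul m (G k) = m := by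
  ext j
  rw [vecMul_G_apply, (ZMod.natCast_eq_zero_iff_even).2 h, zero_add]

theorem vecMul_G_of_odd {m : Fin k → ZMod 2} (h : Odd (hammingNorm m)) :
    Matrix.vecMul m (G k) = m + 1 := by
  ext j
  rw [vecMul_G_apply, (ZMod.natCast_eq_one_iff_odd).2 h, add_comm]
  rfl

theorem hammingNorm_codeword (m : Fin k → ZMod 2) :
    hammingNorm m + hammingNorm (Matrix.vecMul m (G k)) + hammingNorm m =
      if Even (hammingNorm m) then 3 * hammingNorm m else k + hammingNorm m := by
  split_ifs with h
  · rw [vecMul_G_of_even h]; ring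
  · have := ZMod.hammingNorm_add_one_add_hammingNorm m
    rw [vecMul_G_of_odd (Nat.not_even_iff_odd.1 h)]
    simp only [Fintype.card_fin] at this
    omega

end LkPlus

theorem stmt15 (k : ℕ) :
    {w : ℕ | ∃ m : Fin k → ZMod 2,
        w = hammingNorm m + hammingNorm (Matrix.vecMul m (G k)) + hammingNorm m}
      = {w : ℕ | ∃ i : ℕ, w = 6 * i ∧ 6 * i ≤ 3 * k}
        ∪ {w : ℕ | ∃ i : ℕ, w = k + 2 * i + 1 ∧ 2 * i + 1 ≤ k} := by
  ext w
  simp only [Set.mem_ofPred_eq, Set.mem_union]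
  constructor
  · rintro ⟨m, rfl⟩
    have hle : hammingNorm m ≤ k := by simpa using hammingNorm_le_card_fintype (x := m)
    rw [hammingNorm_codeword]
    obtain ⟨i, hi | hi⟩ := Nat.even_or_odd' (hammingNorm m)
    · left; exact ⟨i, by rw [hi, if_pos (even_two_mul i)]; ring, by omega⟩
    · right; exact ⟨i, by rw [hi, if_neg (Nat.not_even_two_mul_add_one i)]; ring, by omega⟩
  · rintro (⟨i, rfl, hi⟩ | ⟨i, rfl, hi⟩)
    · obtain ⟨m, hm⟩ : ∃ m : Fin k → ZMod 2, hammingNorm m = 2 * i :=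
        exists_hammingNorm_eq (by rw [Fintype.card_fin]; omega)
      exact ⟨m, by rw [hammingNorm_codeword, hm, if_pos (even_two_mul i)]; ring⟩
    · obtain ⟨m, hm⟩ : ∃ m : Fin k → ZMod 2, hammingNorm m = 2 * i + 1 :=
        exists_hammingNorm_eq (by rwa [Fintype.card_fin])
      exact ⟨m, by rw [hammingNorm_codeword, hm, if_neg (Nat.not_even_two_mul_add_one i)]; ring⟩
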